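/- arXiv:2603.23006 — 6 statements merged into one kernel-verified Lean document; each statement's English description precedes it below -/
import Mathlib

section
/- Let M ≥ 2, let v ∈ ℂ^M have all entries of unit modulus, and let g ∈ ℝ^M. Define the mean ḡ = (1/M)∑_{m=1}^M g_m, the centered vector g̃ = g − ḡ·𝟙 (𝟙 ∈ ℝ^M the all-ones vector), the diagonal matrices D = diag(g) and D̃ = diag(g̃), and u = D̃ v ∈ ℂ^M. Then v*u = 0 and D v v* − v v* D = u v* − v u*, where * denotes conjugate transpose. -/
/-!
Since `D` is Hermitian, `D v v* − v v* D = (D v) v* − v (D v)*`, and the right-hand side does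
not change when `D v` is replaced by `D v − ḡ v = D̃ v`, because `ḡ` is real. Orthogonality holds
because `|v m| = 1` gives `v* D̃ v = ∑ g̃ m`, and the centred vector `g̃` sums to zero.
-/

open Matrix

section
variable {n R : Type*} [CommRing R] [StarRing R]

theorem Matrix.IsHermitian.mul_vecMulVec_star_sub [Fintype n] {A : Matrix n n R} (hA : A.IsHermitian)
    (v : n → R) :
    A * vecMulVec v (star v) - vecMulVec v (star v) * A
      = vecMulVec (A *ᵥ v) (star v) - vecMulVec v (star (A *ᵥ v)) := by
  rw [mul_vecMulVec, vecMulVec_mul, star_mulVec, hA.eq]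

theorem vecMulVec_sub_smul_star_sub (w v : n → R) {c : R} (hc : IsSelfAdjoint c) :
    vecMulVec (w - c • v) (star v) - vecMulVec v (star (w - c • v))
      = vecMulVec w (star v) - vecMulVec v (star w) := by
  rw [star_sub, star_smul, hc.star_eq, sub_vecMulVec, vecMulVec_sub, smul_vecMulVec,
    vecMulVec_smul]
  abel

theorem star_dotProduct_diagonal_mulVec [Fintype n] [DecidableEq n] {v : n → R}
    (hv : ∀ i, star (v i) * v i = 1) (d : n → R) :
    star v ⬝ᵥ (diagonal d *ᵥ v) = ∑ i, d i := by
  refine Finset.sum_congr rfl fun i _ => ?_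
  rw [mulVec_diagonal, Pi.star_apply, mul_left_comm, hv i, mul_one]

end

theorem commutator_decomposition_general
    (M : ℕ) (v : Fin M → ℂ) (hv : ∀ m, ‖v m‖ = 1)
    (g : Fin M → ℝ)
    (gbar : ℝ) (hgbar : gbar = (∑ m, g m) / M)
    (gt : Fin M → ℝ) (hgt : ∀ m, gt m = g m - gbar)
    (D Dt : Matrix (Fin M) (Fin M) ℂ)
    (hD : D = Matrix.diagonal fun m => (g m : ℂ))
    (hDt : Dt = Matrix.diagonal fun m => (gt m : ℂ))
    (u : Fin M → ℂ) (hu : u = Dt.mulVec v) :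
    star v ⬝ᵥ u = 0 ∧
    D * vecMulVec v (star v) - vecMulVec v (star v) * D
      = vecMulVec u (star v) - vecMulVec v (star u) := by
  have hv_unit : ∀ m, star (v m) * v m = 1 := fun m => by
    rw [Complex.star_def, Complex.conj_mul', hv m, Complex.ofReal_one, one_pow]
  have hgt_balance : gt = Fintype.balance g := by
    ext m
    rw [hgt, Fintype.balance_apply, Fintype.expect_eq_sum_div_card, Fintype.card_fin, hgbar]
  have hu_shift : u = D *ᵥ v - (gbar : ℂ) • v := by
    ext m
    simp [hu, hDt, hD, mulVec_diagonal, hgt, sub_mul]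
  have hD_herm : D.IsHermitian :=
    hD ▸ isHermitian_diagonal_of_self_adjoint _ (funext fun m => Complex.conj_ofReal (g m))
  refine ⟨?_, ?_⟩
  · rw [hu, hDt, star_dotProduct_diagonal_mulVec hv_unit, ← Complex.ofReal_sum, hgt_balance,
      Fintype.sum_balance, Complex.ofReal_zero]
  · rw [hu_shift, vecMulVec_sub_smul_star_sub _ _ (Complex.conj_ofReal gbar),
      hD_herm.mul_vecMulVec_star_sub]

/-- For `v ∈ ℂ^M` with unit-modulus entries and `g ∈ ℝ^M`, setting
`ḡ = (1/M)∑ g m`, `g̃ = g − ḡ𝟙`, `D = diag g`, `D̃ = diag g̃` and `u = D̃ v`,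
we have `v* u = 0` and `D v v* − v v* D = u v* − v u*`. -/
theorem commutator_decomposition
    (M : ℕ) (hM : 2 ≤ M) (v : Fin M → ℂ) (hv : ∀ m, ‖v m‖ = 1)
    (g : Fin M → ℝ)
    (gbar : ℝ) (hgbar : gbar = (∑ m, g m) / M)
    (gt : Fin M → ℝ) (hgt : ∀ m, gt m = g m - gbar)
    (D Dt : Matrix (Fin M) (Fin M) ℂ)
    (hD : D = Matrix.diagonal fun m => (g m : ℂ))
    (hDt : Dt = Matrix.diagonal fun m => (gt m : ℂ))
    (u : Fin M → ℂ) (hu : u = Dt.mulVec v) :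
    star v ⬝ᵥ u = 0 ∧
    D * vecMulVec v (star v) - vecMulVec v (star v) * D
      = vecMulVec u (star v) - vecMulVec v (star u) :=
  commutator_decomposition_general M v hv g gbar hgbar gt hgt D Dt hD hDt u hu
end

section
/- Let d ≥ 1, M ≥ 2, let p, p_1, …, p_M ∈ ℝ^d with p ≠ p_m for all m, and let c > 0. Define τ_m = ‖p − p_m‖₂/c, the delay-gradient vectors g_i ∈ ℝ^M by [g_i]_m = (p_i − [p_m]_i)/(c‖p − p_m‖₂) for 1 ≤ i ≤ d, the centering projection P = I_M − (1/M)𝟙𝟙ᵀ, the geometry matrix G ∈ ℝ^{d×d} by G_{ij} = (P g_i)ᵀ(P g_j), and for f ∈ ℝ the steering vector v(f) ∈ ℂ^M with [v(f)]_m = exp(−2πℹ f τ_m). Fix band constants S_b > 0, B_b > 0, and an effective noise level σ² > 0; set γ = S_b B_b²/σ², w = 2Mγ²/(1 + Mγ), D_i = diag(g_i), S(f) = S_b B_b² v(f)v(f)* + σ² I_M, and S'_i(f) = 2πℹ f S_b B_b² (v(f)v(f)* D_i − D_i v(f)v(f)*). Then for every f ∈ ℝ and all 1 ≤ i, j ≤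 d: tr(S(f)^{-1} S'_i(f) S(f)^{-1} S'_j(f)) = (2πf)² · w · G_{ij}. -/
/-!
Write `A = v v*`. The entries of `v` have modulus one, so `A² = M A`. Consequently
`A [A, D] A = 0` and `A [A, D] + [A, D] A = M [A, D]`, so sandwiching `[A, D]` between two
copies of `S⁻¹ = σ⁻² I - β A` only rescales it, by `(σ² (σ² + M S_b B_b²))⁻¹`. What remains is
`tr([A, D_i] [A, D_j]) = 2 (∑ g_i)(∑ g_j) - 2 M ∑ g_i g_j = -2 M G_ij`.
-/

open Matrix Real

namespace Matrix

variable {n R K : Type*} [Fintype n]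

theorem dotProduct_mul_eq_sum [CommRing R] {u w : n → R} (hwu : ∀ m, w m * u m = 1)
    (d : n → R) : w ⬝ᵥ (d * u) = ∑ m, d m := by
  refine Finset.sum_congr rfl fun m _ => ?_
  simp only [Pi.mul_apply]
  linear_combination d m * hwu m

variable [DecidableEq n]

section CommRing
variable [CommRing R]

theorem smul_one_add_smul_mul_commutator_mul {A : Matrix n n R} {μ : R} (hA : A * A = μ • A)
    (D : Matrix n n R) (α β : R) :
    (α • 1 + β • A) * (A * D - D * A) * (α • 1 + β • A)
      = (α * (α + μ * β)) • (A * D - D * A) := by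
  have hAC : A * (A * D - D * A) = μ • (A * D) - A * D * A := by
    rw [mul_sub, ← Matrix.mul_assoc, hA, smul_mul_assoc, Matrix.mul_assoc]
  have hCA : (A * D - D * A) * A = A * D * A - μ • (D * A) := by
    rw [sub_mul, Matrix.mul_assoc D, hA, mul_smul_comm]
  have hACA : A * (A * D - D * A) * A = 0 := by
    rw [Matrix.mul_assoc, hCA, mul_sub, ← Matrix.mul_assoc, ← Matrix.mul_assoc, hA,
      mul_smul_comm, smul_mul_assoc, smul_mul_assoc, Matrix.mul_assoc, sub_self]
  simp only [add_mul, mul_add, smul_mul_assoc, mul_smul_comm, Matrix.one_mul, Matrix.mul_one,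
    hACA, smul_zero, add_zero]
  rw [hAC, hCA]
  module

theorem commutator_vecMulVec_diagonal_apply (u w d : n → R) (i k : n) :
    (vecMulVec u w * diagonal d - diagonal d * vecMulVec u w) i k = u i * w k * (d k - d i) := by
  simp only [sub_apply, mul_diagonal, diagonal_mul, vecMulVec_apply]
  ring

theorem trace_commutator_vecMulVec_diagonal_mul (u w d e : n → R) :
    trace ((vecMulVec u w * diagonal d - diagonal d * vecMulVec u w) *
        (vecMulVec u w * diagonal e - diagonal e * vecMulVec u w))
      = 2 * (w ⬝ᵥ (d * u)) * (w ⬝ᵥ (e * u)) - 2 * (w ⬝ᵥ u) * (w ⬝ᵥ (d * e * u)) := by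
  set g : n → n → R := fun i k => w i * u i * (w k * u k) * (d i * e k - d k * e k)
  calc _ = ∑ i, ∑ k, (g i k + g k i) := by
        simp only [trace, diag, mul_apply, commutator_vecMulVec_diagonal_apply]
        exact Finset.sum_congr rfl fun i _ => Finset.sum_congr rfl fun k _ => by ring
    _ = 2 * ∑ i, ∑ k, g i k := by
        rw [two_mul]
        simp only [Finset.sum_add_distrib]
        rw [Finset.sum_comm (f := fun i k => g k i)]
    _ = _ := by
        simp only [g, dotProduct, Pi.mul_apply, mul_assoc (2 : R), ← mul_sub, Finset.sum_mul_sum,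
          ← Finset.sum_sub_distrib]
        congr 1
        exact Finset.sum_congr rfl fun i _ => Finset.sum_congr rfl fun k _ => by ring

end CommRing

section Field
variable [Field K]

theorem inv_smul_add_smul_one {A : Matrix n n K} {μ : K} (hA : A * A = μ • A) {a s : K}
    (hs : s ≠ 0) (hsa : s + μ * a ≠ 0) :
    (a • A + s • 1)⁻¹ = s⁻¹ • 1 - (a / (s * (s + μ * a))) • A := by
  refine inv_eq_right_inv ?_
  simp only [add_mul, mul_sub, smul_mul_assoc, mul_smul_comm, Matrix.one_mul, Matrix.mul_one, hA,
    smul_smul]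
  set c := a / (s * (s + μ * a)) with hc
  have hA_coeff : s⁻¹ * a - c * (s + μ * a) = 0 := by
    rw [hc, div_mul_eq_mul_div, mul_div_mul_right _ _ hsa, inv_mul_eq_div, sub_self]
  have h1_coeff : s⁻¹ * s = 1 := inv_mul_cancel₀ hs
  linear_combination (norm := module) hA_coeff • A + h1_coeff • (1 : Matrix n n K)

theorem inv_mul_commutator_mul_inv {A : Matrix n n K} {μ : K} (hA : A * A = μ • A) {a s : K}
    (hs : s ≠ 0) (hsa : s + μ * a ≠ 0) (D : Matrix n n K) :
    (a • A + s • 1)⁻¹ * (A * D - D * A) * (a • A + s • 1)⁻¹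
      = (s * (s + μ * a))⁻¹ • (A * D - D * A) := by
  rw [inv_smul_add_smul_one hA hs hsa, sub_eq_add_neg, ← neg_smul,
    smul_one_add_smul_mul_commutator_mul hA]
  congr 1
  field_simp
  ring

theorem centering_mulVec_dotProduct {P : Matrix n n K}
    (hP : P = 1 - (Fintype.card n : K)⁻¹ • vecMulVec 1 1) (x y : n → K) :
    (P *ᵥ x) ⬝ᵥ (P *ᵥ y) = x ⬝ᵥ y - (∑ m, x m) * (∑ m, y m) / Fintype.card n := by
  set N : K := (Fintype.card n : K)
  have hPz : ∀ z m, (P *ᵥ z) m = z m - N⁻¹ * ∑ k, z k := by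
    intro z m
    rw [hP, sub_mulVec, one_mulVec, smul_mulVec, vecMulVec_mulVec]
    simp [dotProduct]
  have hN : N * N⁻¹ * N⁻¹ = N⁻¹ := by simpa only [inv_inv] using inv_mul_mul_self N⁻¹
  simp only [dotProduct, hPz, sub_mul, mul_sub, Finset.sum_sub_distrib, ← Finset.sum_mul,
    ← Finset.mul_sum, Finset.sum_const, Finset.card_univ, nsmul_eq_mul]
  linear_combination (∑ m, x m) * (∑ m, y m) * hN

end Field

end Matrix

theorem Complex.star_exp_mul_exp_of_re_eq_zero {z : ℂ} (hz : z.re = 0) :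
    star (exp z) * exp z = 1 := by
  rw [Complex.star_def, Complex.conj_mul', Complex.norm_exp, hz]
  simp

theorem whittle_trace_identity_general
    (d M : ℕ) (hM : 2 ≤ M)
    (τ : Fin M → ℝ)
    (g : Fin d → Fin M → ℝ)
    (P : Matrix (Fin M) (Fin M) ℝ)
    (hP : P = (1 : Matrix (Fin M) (Fin M) ℝ) - ((M : ℝ))⁻¹ • vecMulVec 1 1)
    (G : Fin d → Fin d → ℝ)
    (hG : ∀ i j, G i j = P.mulVec (g i) ⬝ᵥ P.mulVec (g j))
    (v : ℝ → Fin M → ℂ)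
    (hv : ∀ f m, v f m = Complex.exp (-(2 * π * Complex.I * f * τ m)))
    (Sb Bb σ2 : ℝ) (hSb : 0 < Sb) (hσ2 : 0 < σ2)
    (γ : ℝ) (hγ : γ = Sb * Bb ^ 2 / σ2)
    (w : ℝ) (hw : w = 2 * M * γ ^ 2 / (1 + M * γ))
    (D : Fin d → Matrix (Fin M) (Fin M) ℂ)
    (hD : ∀ i, D i = Matrix.diagonal fun m => (g i m : ℂ))
    (S : ℝ → Matrix (Fin M) (Fin M) ℂ)
    (hS : ∀ f, S f = ((Sb * Bb ^ 2 : ℝ) : ℂ) • vecMulVec (v f) (star (v f))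
        + ((σ2 : ℝ) : ℂ) • (1 : Matrix (Fin M) (Fin M) ℂ))
    (S' : Fin d → ℝ → Matrix (Fin M) (Fin M) ℂ)
    (hS' : ∀ i f, S' i f = (2 * π * Complex.I * f * (Sb * Bb ^ 2)) •
        (vecMulVec (v f) (star (v f)) * D i - D i * vecMulVec (v f) (star (v f)))) :
    ∀ (f : ℝ) (i j : Fin d),
      Matrix.trace ((S f)⁻¹ * S' i f * (S f)⁻¹ * S' j f)
        = (((2 * π * f) ^ 2 * w * G i j : ℝ) : ℂ) := by
  intro f i j
  have hunit : ∀ m, star (v f) m * v f m = 1 := fun m => by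
    rw [Pi.star_apply, hv]
    exact Complex.star_exp_mul_exp_of_re_eq_zero (by simp)
  have hvv : star (v f) ⬝ᵥ v f = M := by
    simpa using dotProduct_mul_eq_sum hunit 1
  have hA : vecMulVec (v f) (star (v f)) * vecMulVec (v f) (star (v f))
      = (M : ℂ) • vecMulVec (v f) (star (v f)) := by
    rw [vecMulVec_mul_vecMulVec, hvv, vecMulVec_smul]
  have hσ : ((σ2 : ℝ) : ℂ) ≠ 0 := by exact_mod_cast hσ2.ne'
  have hσM : ((σ2 : ℝ) : ℂ) + M * ((Sb * Bb ^ 2 : ℝ) : ℂ) ≠ 0 := by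
    exact_mod_cast (by positivity : 0 < σ2 + M * (Sb * Bb ^ 2)).ne'
  have hGij : G i j = ∑ m, g i m * g j m - (∑ m, g i m) * (∑ m, g j m) / M := by
    rw [hG, centering_mulVec_dotProduct (by rw [hP, Fintype.card_fin]), Fintype.card_fin]
    rfl
  rw [hS, hS', hS', hD, hD]
  simp only [mul_smul_comm, smul_mul_assoc, trace_smul, smul_eq_mul,
    inv_mul_commutator_mul_inv hA hσ hσM, trace_commutator_vecMulVec_diagonal_mul,
    dotProduct_mul_eq_sum hunit, hvv, Pi.mul_apply]
  have hM0 : (M : ℂ) ≠ 0 := Nat.cast_ne_zero.mpr (by omega)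
  rw [hGij, hw, hγ]
  push_cast at hσM ⊢
  field_simp
  rw [Complex.I_sq]
  ring

/-- **Key trace identity (Lemma 1).** On a spectral band with source PSD level `S_b`,
test-channel gain `B_b` and effective noise level `σ² > 0`, for the compressed
cross-spectral density `S(f) = S_b B_b² v(f)v(f)* + σ² I` and its coordinate
derivatives `S'_i(f) = 2πi f S_b B_b² (v(f)v(f)* D_i − D_i v(f)v(f)*)`,
`tr(S(f)⁻¹ S'_i(f) S(f)⁻¹ S'_j(f)) = (2πf)² w G_{ij}` where
`γ = S_b B_b²/σ²`, `w = 2Mγ²/(1+Mγ)` and `G` is the geometry matrix. -/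
theorem whittle_trace_identity
    (d M : ℕ) (hd : 1 ≤ d) (hM : 2 ≤ M)
    (p : EuclideanSpace ℝ (Fin d)) (ps : Fin M → EuclideanSpace ℝ (Fin d))
    (hps : ∀ m, p ≠ ps m) (c : ℝ) (hc : 0 < c)
    (τ : Fin M → ℝ) (hτ : ∀ m, τ m = ‖p - ps m‖ / c)
    (g : Fin d → Fin M → ℝ)
    (hg : ∀ i m, g i m = (p i - ps m i) / (c * ‖p - ps m‖))
    (P : Matrix (Fin M) (Fin M) ℝ)
    (hP : P = (1 : Matrix (Fin M) (Fin M) ℝ) - ((M : ℝ))⁻¹ • vecMulVec 1 1)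
    (G : Fin d → Fin d → ℝ)
    (hG : ∀ i j, G i j = P.mulVec (g i) ⬝ᵥ P.mulVec (g j))
    (v : ℝ → Fin M → ℂ)
    (hv : ∀ f m, v f m = Complex.exp (-(2 * π * Complex.I * f * τ m)))
    (Sb Bb σ2 : ℝ) (hSb : 0 < Sb) (hBb : 0 < Bb) (hσ2 : 0 < σ2)
    (γ : ℝ) (hγ : γ = Sb * Bb ^ 2 / σ2)
    (w : ℝ) (hw : w = 2 * M * γ ^ 2 / (1 + M * γ))
    (D : Fin d → Matrix (Fin M) (Fin M) ℂ)
    (hD : ∀ i, D i = Matrix.diagonal fun m => (g i m : ℂ))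
    (S : ℝ → Matrix (Fin M) (Fin M) ℂ)
    (hS : ∀ f, S f = ((Sb * Bb ^ 2 : ℝ) : ℂ) • vecMulVec (v f) (star (v f))
        + ((σ2 : ℝ) : ℂ) • (1 : Matrix (Fin M) (Fin M) ℂ))
    (S' : Fin d → ℝ → Matrix (Fin M) (Fin M) ℂ)
    (hS' : ∀ i f, S' i f = (2 * π * Complex.I * f * (Sb * Bb ^ 2)) •
        (vecMulVec (v f) (star (v f)) * D i - D i * vecMulVec (v f) (star (v f)))) :
    ∀ (f : ℝ) (i j : Fin d),
      Matrix.trace ((S f)⁻¹ * S' i f * (S f)⁻¹ * S' j f)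
        = (((2 * π * f) ^ 2 * w * G i j : ℝ) : ℂ) :=
  whittle_trace_identity_general d M hM τ g P hP G hG v hv Sb Bb σ2 hSb hσ2 γ hγ w hw D hD S hS S'
    hS'
end

section
/- Let d ≥ 1, M ≥ 2, let p, p_1, …, p_M ∈ ℝ^d with p ≠ p_m for all m, and let c > 0. Define τ_m = ‖p − p_m‖₂/c, the delay-gradient vectors g_i ∈ ℝ^M by [g_i]_m = (p_i − [p_m]_i)/(c‖p − p_m‖₂), the centering projection P = I_M − (1/M)𝟙𝟙ᵀ, the geometry matrix G ∈ ℝ^{d×d} by G_{ij} = (P g_i)ᵀ(P g_j), and for f ∈ ℝ the steering vector v(f) ∈ ℂ^M with [v(f)]_m = exp(−2πℹ f τ_m). Fix 0 < f_L < f_H, S_L > S_H > 0, N₀ > 0, and a water level λ with 0 < λ < S_H + N₀. For b ∈ {L, H} set the rate–distortion water-filling gains B_b = 1 − λ/(S_b + N₀), the effective noise levels S_{w,b} = B_b² N₀ + λ B_b, effective SNRs γ_b = S_b B_b²/S_{w,b}, and band weights w_b = 2Mγ_b²/(1 + Mγ_b). For |f| ≤ f_L let S(f) = S_L B_L² v(f)v(f)*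 + S_{w,L} I_M and S'_i(f) = 2πℹ f S_L B_L² (v(f)v(f)* D_i − D_i v(f)v(f)*), and for f_L < |f| ≤ f_H let S(f) = S_H B_H² v(f)v(f)* + S_{w,H} I_M and S'_i(f) = 2πℹ f S_H B_H² (v(f)v(f)* D_i − D_i v(f)v(f)*), where D_i = diag(g_i). Then for all 1 ≤ i, j ≤ d: (1/2)∫_{−f_H}^{f_H} tr(S(f)^{-1} S'_i(f) S(f)^{-1} S'_j(f)) df = (4π²/3)·(f_L³ w_L + (f_H³ − f_L³) w_H)·G_{ij}. -/
/-!
In each band the spectral matrix is white noise plus a rank-one term, `a • v v* + σ • 1` with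
`|v m| = 1`, so Sherman–Morrison gives its inverse as a polynomial in `v v*`. That inverse absorbs
`v v*` as a scalar from either side, and cyclicity of the trace collapses
`tr (S⁻¹ S'ᵢ S⁻¹ S'ⱼ)` to `4π² f² w_b (P gᵢ ⬝ P gⱼ)`: the centering matrix enters through
`∑ gᵢ gⱼ - (∑ gᵢ)(∑ gⱼ)/M = P gᵢ ⬝ P gⱼ`. The integrand is thus a band-wise constant times `f²`,
and integrating `f²` over the two bands produces the weights `f_L³` and `f_H³ - f_L³`.
-/

open Matrix Real

namespace Matrix

variable {n : Type*} [Fintype n]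

section CommRing

variable {R : Type*} [CommRing R]

theorem vecMulVec_mul_self (u w : n → R) :
    vecMulVec u w * vecMulVec u w = (w ⬝ᵥ u) • vecMulVec u w := by
  rw [vecMulVec_mul_vecMulVec, vecMulVec_smul]

theorem vecMulVec_mul_mul_vecMulVec (u w : n → R) (X : Matrix n n R) :
    vecMulVec u w * X * vecMulVec u w = (w ⬝ᵥ X *ᵥ u) • vecMulVec u w := by
  rw [vecMulVec_mul, vecMulVec_mul_vecMulVec, vecMulVec_smul, dotProduct_mulVec]

theorem trace_vecMulVec_mul (u w : n → R) (X : Matrix n n R) :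
    trace (vecMulVec u w * X) = w ⬝ᵥ X *ᵥ u := by
  rw [vecMulVec_mul, trace_vecMulVec, dotProduct_comm, dotProduct_mulVec]

theorem trace_mul_commutator_mul_commutator {A B X Y : Matrix n n R} {m ρ : R}
    (hAA : A * A = m • A) (hAB : A * B = ρ • A) (hBA : B * A = ρ • A) :
    trace (B * (A * X - X * A) * B * (A * Y - Y * A)) =
      2 * ρ ^ 2 * trace (A * X * A * Y) -
        ρ * m * (trace (A * X * B * Y) + trace (A * Y * B * X)) := by
  have hAA' (Z : Matrix n n R) : A * (A * Z) = m • (A * Z) := by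
    rw [← mul_assoc, hAA, smul_mul_assoc]
  have hAB' (Z : Matrix n n R) : A * (B * Z) = ρ • (A * Z) := by
    rw [← mul_assoc, hAB, smul_mul_assoc]
  have hBA' (Z : Matrix n n R) : B * (A * Z) = ρ • (A * Z) := by
    rw [← mul_assoc, hBA, smul_mul_assoc]
  simp only [mul_sub, sub_mul, trace_sub]
  -- rotate each term so that it starts with `A`
  rw [show B * (A * X) * B * (Y * A) = (B * A * X * B * Y) * A by noncomm_ring,
    show B * (X * A) * B * (A * Y) = (B * X) * (A * B * A * Y) by noncomm_ring,
    show B * (X * A) * B * (Y * A) = (B * X * A * B * Y) * A by noncomm_ring,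
    trace_mul_comm _ A, trace_mul_comm (B * X), trace_mul_comm _ A]
  simp only [mul_assoc, smul_mul_assoc, hAA', hAB', hBA', mul_smul_comm, smul_smul, trace_smul,
    smul_eq_mul]
  ring

end CommRing

section Field

variable [DecidableEq n] {K : Type*} [Field K]

theorem inv_smul_vecMulVec_add_smul_one (u w : n → K) {a s : K} (hs : s ≠ 0)
    (h : a * (w ⬝ᵥ u) + s ≠ 0) :
    (a • vecMulVec u w + s • 1)⁻¹ = s⁻¹ • (1 - (a / (a * (w ⬝ᵥ u) + s)) • vecMulVec u w) := by
  refine inv_eq_right_inv ?_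
  have hβ : a - a / (a * (w ⬝ᵥ u) + s) * (a * (w ⬝ᵥ u) + s) = 0 := by
    rw [div_mul_cancel₀ _ h, sub_self]
  simp only [add_mul, mul_smul_comm, smul_mul_assoc, mul_sub, Matrix.mul_one, Matrix.one_mul,
    vecMulVec_mul_self]
  linear_combination (norm := module)
    hβ • (s⁻¹ • vecMulVec u w) + (inv_mul_cancel₀ hs) • (1 : Matrix n n K)

theorem trace_inv_mul_commutator_mul_inv_mul_commutator (u w : n → K) (X Y : Matrix n n K)
    {a s : K} (hs : s ≠ 0) (h : a * (w ⬝ᵥ u) + s ≠ 0) :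
    trace ((a • vecMulVec u w + s • 1)⁻¹ * (vecMulVec u w * X - X * vecMulVec u w) *
        (a • vecMulVec u w + s • 1)⁻¹ * (vecMulVec u w * Y - Y * vecMulVec u w)) =
      (2 * (w ⬝ᵥ X *ᵥ u) * (w ⬝ᵥ Y *ᵥ u) -
          (w ⬝ᵥ u) * (w ⬝ᵥ (X * Y) *ᵥ u + w ⬝ᵥ (Y * X) *ᵥ u)) / (s * (a * (w ⬝ᵥ u) + s)) := by
  rw [inv_smul_vecMulVec_add_smul_one u w hs h]
  set A := vecMulVec u w
  set m := w ⬝ᵥ u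
  set β := a / (a * m + s) with hβ
  have hAA : A * A = m • A := vecMulVec_mul_self u w
  have hρ : s⁻¹ * (1 - β * m) = (a * m + s)⁻¹ := by rw [hβ]; field_simp; ring
  have hAR : A * (s⁻¹ • (1 - β • A)) = (a * m + s)⁻¹ • A := by
    simp only [mul_smul_comm, mul_sub, Matrix.mul_one, hAA]
    linear_combination (norm := module) hρ • A
  have hRA : s⁻¹ • (1 - β • A) * A = (a * m + s)⁻¹ • A := by
    simp only [smul_mul_assoc, sub_mul, Matrix.one_mul, hAA]
    linear_combination (norm := module) hρ • A
  have hAXAY (X Y : Matrix n n K) :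
      trace (A * X * A * Y) = (w ⬝ᵥ X *ᵥ u) * (w ⬝ᵥ Y *ᵥ u) := by
    rw [vecMulVec_mul_mul_vecMulVec, smul_mul_assoc, trace_smul, trace_vecMulVec_mul,
      smul_eq_mul]
  have hAXRY (X Y : Matrix n n K) : trace (A * X * (s⁻¹ • (1 - β • A)) * Y) =
      s⁻¹ * (w ⬝ᵥ (X * Y) *ᵥ u - β * ((w ⬝ᵥ X *ᵥ u) * (w ⬝ᵥ Y *ᵥ u))) := by
    simp only [mul_smul_comm, smul_mul_assoc, mul_sub, sub_mul, Matrix.mul_one, trace_smul,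
      trace_sub, hAXAY, smul_eq_mul]
    rw [Matrix.mul_assoc A X Y, trace_vecMulVec_mul]
  rw [trace_mul_commutator_mul_commutator hAA hAR hRA, hAXAY, hAXRY, hAXRY, hβ]
  field_simp
  ring

end Field

variable [DecidableEq n]

noncomputable def centeringMatrix (n : Type*) [Fintype n] [DecidableEq n] : Matrix n n ℝ :=
  1 - (Fintype.card n : ℝ)⁻¹ • vecMulVec 1 1

theorem centeringMatrix_mulVec (x : n → ℝ) :
    centeringMatrix n *ᵥ x = x - ((Fintype.card n : ℝ)⁻¹ * ∑ i, x i) • 1 := by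
  rw [centeringMatrix, sub_mulVec, one_mulVec, smul_mulVec, vecMulVec_mulVec, op_smul_eq_smul,
    one_dotProduct, smul_smul]

theorem centeringMatrix_mulVec_dotProduct (x y : n → ℝ) :
    (centeringMatrix n *ᵥ x) ⬝ᵥ (centeringMatrix n *ᵥ y) =
      x ⬝ᵥ y - (Fintype.card n : ℝ)⁻¹ * (∑ i, x i) * ∑ i, y i := by
  have hN : ((Fintype.card n : ℝ))⁻¹ * (Fintype.card n : ℝ)⁻¹ * Fintype.card n =
      (Fintype.card n : ℝ)⁻¹ := by
    rcases eq_or_ne (Fintype.card n : ℝ) 0 with h | h <;> field_simp [h]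
  simp only [centeringMatrix_mulVec, sub_dotProduct, dotProduct_sub, smul_dotProduct,
    dotProduct_smul, smul_eq_mul]
  simp only [dotProduct_one, one_dotProduct, Pi.one_apply, Finset.sum_const, Finset.card_univ,
    nsmul_eq_mul, mul_one]
  linear_combination (∑ i, x i) * (∑ i, y i) * hN

end Matrix

theorem trace_whittle_band {n : Type*} [Fintype n] [DecidableEq n] [Nonempty n] {v : n → ℂ}
    (hv : ∀ m, ‖v m‖ = 1) (x y : n → ℝ) {S B σ : ℝ} (hS : 0 ≤ S) (hσ : 0 < σ) (f : ℝ) :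
    trace ((((S * B ^ 2 : ℝ) : ℂ) • vecMulVec v (star v) + ((σ : ℝ) : ℂ) • 1)⁻¹ *
        ((2 * π * Complex.I * f * (S * B ^ 2)) •
          (vecMulVec v (star v) * diagonal (fun m => (x m : ℂ)) -
            diagonal (fun m => (x m : ℂ)) * vecMulVec v (star v))) *
        (((S * B ^ 2 : ℝ) : ℂ) • vecMulVec v (star v) + ((σ : ℝ) : ℂ) • 1)⁻¹ *
        ((2 * π * Complex.I * f * (S * B ^ 2)) •
          (vecMulVec v (star v) * diagonal (fun m => (y m : ℂ)) -
            diagonal (fun m => (y m : ℂ)) * vecMulVec v (star v)))) =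
      ((4 * π ^ 2 *
          (2 * Fintype.card n * (S * B ^ 2 / σ) ^ 2 / (1 + Fintype.card n * (S * B ^ 2 / σ))) *
          ((centeringMatrix n *ᵥ x) ⬝ᵥ (centeringMatrix n *ᵥ y)) * f ^ 2 : ℝ) : ℂ) := by
  have hnorm : star v ⬝ᵥ v = Fintype.card n := by
    simp [dotProduct, Complex.conj_mul', hv]
  have hdiag (z : n → ℂ) : star v ⬝ᵥ diagonal z *ᵥ v = ∑ m, z m := by
    simp only [dotProduct, mulVec_diagonal, Pi.star_apply]
    refine Finset.sum_congr rfl fun m _ => ?_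
    rw [mul_left_comm, Complex.star_def, Complex.conj_mul', hv]
    simp
  have hden : 0 < S * B ^ 2 * Fintype.card n + σ := by positivity
  simp only [mul_smul_comm, smul_mul_assoc, smul_smul, trace_smul, smul_eq_mul]
  rw [trace_inv_mul_commutator_mul_inv_mul_commutator _ _ _ _ (by exact_mod_cast hσ.ne')
    (by rw [hnorm]; exact_mod_cast hden.ne'), hnorm, hdiag, hdiag,
    (commute_diagonal (fun m => (y m : ℂ)) _).eq, diagonal_mul_diagonal, hdiag,
    centeringMatrix_mulVec_dotProduct]
  simp only [dotProduct]
  have hN : (Fintype.card n : ℂ) ≠ 0 := Nat.cast_ne_zero.mpr Fintype.card_ne_zero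
  have hσ' : (σ : ℂ) ≠ 0 := by exact_mod_cast hσ.ne'
  push_cast
  field_simp
  rw [Complex.I_sq]
  ring

theorem integral_ite_abs_le_mul_sq {a b : ℝ} (ha : 0 ≤ a) (hab : a ≤ b) (cL cH : ℝ) :
    ∫ x in -b..b, (if |x| ≤ a then cL else cH) * x ^ 2 =
      2 / 3 * (a ^ 3 * cL + (b ^ 3 - a ^ 3) * cH) := by
  set F : ℝ → ℝ := fun x => (if |x| ≤ a then cL else cH) * x ^ 2
  have piece {l r c : ℝ} (h : Set.EqOn F (fun x => c * x ^ 2) (Set.uIoo l r)) :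
      IntervalIntegrable F MeasureTheory.volume l r ∧
        ∫ x in l..r, F x = c * ((r ^ 3 - l ^ 3) / 3) := by
    refine ⟨((continuous_const.mul (continuous_pow 2)).intervalIntegrable l r).congr_uIoo h.symm,
      ?_⟩
    rw [intervalIntegral.integral_congr_uIoo h, intervalIntegral.integral_const_mul,
      integral_pow]
    norm_num
  obtain ⟨hint₁, hval₁⟩ := piece (l := -b) (r := -a) (c := cH) fun x hx => by
    rw [Set.uIoo_of_le (by linarith)] at hx
    simp only [F, if_neg fun h : |x| ≤ a => by linarith [(abs_le.mp h).1, hx.2]]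
  obtain ⟨hint₂, hval₂⟩ := piece (l := -a) (r := a) (c := cL) fun x hx => by
    rw [Set.uIoo_of_le (by linarith)] at hx
    simp only [F, if_pos (abs_le.mpr ⟨hx.1.le, hx.2.le⟩)]
  obtain ⟨hint₃, hval₃⟩ := piece (l := a) (r := b) (c := cH) fun x hx => by
    rw [Set.uIoo_of_le hab] at hx
    simp only [F, if_neg fun h : |x| ≤ a => by linarith [(abs_le.mp h).2, hx.1]]
  rw [← intervalIntegral.integral_add_adjacent_intervals hint₁ (hint₂.trans hint₃),
    ← intervalIntegral.integral_add_adjacent_intervals hint₂ hint₃, hval₁, hval₂, hval₃]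
  ring

theorem two_band_whittle_FI_rate_highrate_general
    (d M : ℕ) (hM : 2 ≤ M)
    (τ : Fin M → ℝ)
    (g : Fin d → Fin M → ℝ)
    (P : Matrix (Fin M) (Fin M) ℝ)
    (hP : P = (1 : Matrix (Fin M) (Fin M) ℝ) - ((M : ℝ))⁻¹ • vecMulVec 1 1)
    (G : Fin d → Fin d → ℝ)
    (hG : ∀ i j, G i j = P.mulVec (g i) ⬝ᵥ P.mulVec (g j))
    (v : ℝ → Fin M → ℂ)
    (hv : ∀ f m, v f m = Complex.exp (-(2 * π * Complex.I * f * τ m)))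
    (fL fH SL SH N0 lam : ℝ)
    (hfL : 0 < fL) (hfLH : fL < fH)
    (hSH : 0 < SH) (hSLH : SH < SL) (hN0 : 0 < N0)
    (hlam0 : 0 < lam) (hlamH : lam < SH + N0)
    (BL BH : ℝ)
    (hBL : BL = 1 - lam / (SL + N0)) (hBH : BH = 1 - lam / (SH + N0))
    (SwL SwH : ℝ)
    (hSwL : SwL = BL ^ 2 * N0 + lam * BL)
    (hSwH : SwH = BH ^ 2 * N0 + lam * BH)
    (γL γH : ℝ) (hγL : γL = SL * BL ^ 2 / SwL) (hγH : γH = SH * BH ^ 2 / SwH)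
    (wL wH : ℝ)
    (hwL : wL = 2 * M * γL ^ 2 / (1 + M * γL))
    (hwH : wH = 2 * M * γH ^ 2 / (1 + M * γH))
    (D : Fin d → Matrix (Fin M) (Fin M) ℂ)
    (hD : ∀ i, D i = Matrix.diagonal fun m => (g i m : ℂ))
    (S : ℝ → Matrix (Fin M) (Fin M) ℂ)
    (S' : Fin d → ℝ → Matrix (Fin M) (Fin M) ℂ)
    (hSlow : ∀ f : ℝ, |f| ≤ fL →
      S f = ((SL * BL ^ 2 : ℝ) : ℂ) • vecMulVec (v f) (star (v f))
        + ((SwL : ℝ) : ℂ) • (1 : Matrix (Fin M) (Fin M) ℂ))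
    (hShigh : ∀ f : ℝ, fL < |f| → |f| ≤ fH →
      S f = ((SH * BH ^ 2 : ℝ) : ℂ) • vecMulVec (v f) (star (v f))
        + ((SwH : ℝ) : ℂ) • (1 : Matrix (Fin M) (Fin M) ℂ))
    (hS'low : ∀ (i : Fin d) (f : ℝ), |f| ≤ fL →
      S' i f = (2 * π * Complex.I * f * (SL * BL ^ 2)) •
        (vecMulVec (v f) (star (v f)) * D i - D i * vecMulVec (v f) (star (v f))))
    (hS'high : ∀ (i : Fin d) (f : ℝ), fL < |f| → |f| ≤ fH →
      S' i f = (2 * π * Complex.I * f * (SH * BH ^ 2)) •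
        (vecMulVec (v f) (star (v f)) * D i - D i * vecMulVec (v f) (star (v f)))) :
    ∀ i j : Fin d,
      (1 / 2 : ℂ) * ∫ f in (-fH)..fH,
          Matrix.trace ((S f)⁻¹ * S' i f * (S f)⁻¹ * S' j f)
        = (((4 * π ^ 2 / 3) * (fL ^ 3 * wL + (fH ^ 3 - fL ^ 3) * wH) * G i j : ℝ) : ℂ) := by
  intro i j
  have : Nonempty (Fin M) := ⟨⟨0, by omega⟩⟩
  have hPc : P = centeringMatrix (Fin M) := by rw [hP, centeringMatrix, Fintype.card_fin]
  have hunit (f : ℝ) (m : Fin M) : ‖v f m‖ = 1 := by rw [hv]; simp [Complex.norm_exp]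
  have hBL0 : 0 < BL := by rw [hBL, sub_pos, div_lt_one (by linarith)]; linarith
  have hBH0 : 0 < BH := by rw [hBH, sub_pos, div_lt_one (by linarith)]; linarith
  have hband : Set.EqOn (fun f => trace ((S f)⁻¹ * S' i f * (S f)⁻¹ * S' j f))
      (fun f => (((if |f| ≤ fL then 4 * π ^ 2 * wL * G i j else 4 * π ^ 2 * wH * G i j) *
        f ^ 2 : ℝ) : ℂ)) (Set.uIcc (-fH) fH) := by
    intro f hf
    rw [Set.uIcc_of_le (by linarith)] at hf
    have hfH : |f| ≤ fH := abs_le.mpr hf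
    dsimp only
    split_ifs with hfL'
    · rw [hSlow f hfL', hS'low i f hfL', hS'low j f hfL', hD, hD,
        trace_whittle_band (hunit f) _ _ (by linarith) (by rw [hSwL]; positivity),
        Fintype.card_fin, hwL, hγL, hG, hPc]
    · rw [not_le] at hfL'
      rw [hShigh f hfL' hfH, hS'high i f hfL' hfH, hS'high j f hfL' hfH, hD, hD,
        trace_whittle_band (hunit f) _ _ hSH.le (by rw [hSwH]; positivity),
        Fintype.card_fin, hwH, hγH, hG, hPc]
  rw [intervalIntegral.integral_congr hband, intervalIntegral.integral_ofReal,
    integral_ite_abs_le_mul_sq hfL.le hfLH.le]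
  push_cast
  ring

/-- **High-rate regime of Theorem 1**: under RD water-filling gains
`B_b = 1 − λ/(S_b + N₀)` with `0 < λ < S_H + N₀` (both bands active), the
Whittle Fisher-information rate equals `(4π²/3)(f_L³ w_L + (f_H³ − f_L³) w_H) G_{ij}`. -/
theorem two_band_whittle_FI_rate_highrate
    (d M : ℕ) (hd : 1 ≤ d) (hM : 2 ≤ M)
    (p : EuclideanSpace ℝ (Fin d)) (ps : Fin M → EuclideanSpace ℝ (Fin d))
    (hps : ∀ m, p ≠ ps m) (c : ℝ) (hc : 0 < c)
    (τ : Fin M → ℝ) (hτ : ∀ m, τ m = ‖p - ps m‖ / c)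
    (g : Fin d → Fin M → ℝ)
    (hg : ∀ i m, g i m = (p i - ps m i) / (c * ‖p - ps m‖))
    (P : Matrix (Fin M) (Fin M) ℝ)
    (hP : P = (1 : Matrix (Fin M) (Fin M) ℝ) - ((M : ℝ))⁻¹ • vecMulVec 1 1)
    (G : Fin d → Fin d → ℝ)
    (hG : ∀ i j, G i j = P.mulVec (g i) ⬝ᵥ P.mulVec (g j))
    (v : ℝ → Fin M → ℂ)
    (hv : ∀ f m, v f m = Complex.exp (-(2 * π * Complex.I * f * τ m)))
    (fL fH SL SH N0 lam : ℝ)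
    (hfL : 0 < fL) (hfLH : fL < fH)
    (hSH : 0 < SH) (hSLH : SH < SL) (hN0 : 0 < N0)
    (hlam0 : 0 < lam) (hlamH : lam < SH + N0)
    (BL BH : ℝ)
    (hBL : BL = 1 - lam / (SL + N0)) (hBH : BH = 1 - lam / (SH + N0))
    (SwL SwH : ℝ)
    (hSwL : SwL = BL ^ 2 * N0 + lam * BL)
    (hSwH : SwH = BH ^ 2 * N0 + lam * BH)
    (γL γH : ℝ) (hγL : γL = SL * BL ^ 2 / SwL) (hγH : γH = SH * BH ^ 2 / SwH)
    (wL wH : ℝ)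
    (hwL : wL = 2 * M * γL ^ 2 / (1 + M * γL))
    (hwH : wH = 2 * M * γH ^ 2 / (1 + M * γH))
    (D : Fin d → Matrix (Fin M) (Fin M) ℂ)
    (hD : ∀ i, D i = Matrix.diagonal fun m => (g i m : ℂ))
    (S : ℝ → Matrix (Fin M) (Fin M) ℂ)
    (S' : Fin d → ℝ → Matrix (Fin M) (Fin M) ℂ)
    (hSlow : ∀ f : ℝ, |f| ≤ fL →
      S f = ((SL * BL ^ 2 : ℝ) : ℂ) • vecMulVec (v f) (star (v f))
        + ((SwL : ℝ) : ℂ) • (1 : Matrix (Fin M) (Fin M) ℂ))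
    (hShigh : ∀ f : ℝ, fL < |f| → |f| ≤ fH →
      S f = ((SH * BH ^ 2 : ℝ) : ℂ) • vecMulVec (v f) (star (v f))
        + ((SwH : ℝ) : ℂ) • (1 : Matrix (Fin M) (Fin M) ℂ))
    (hS'low : ∀ (i : Fin d) (f : ℝ), |f| ≤ fL →
      S' i f = (2 * π * Complex.I * f * (SL * BL ^ 2)) •
        (vecMulVec (v f) (star (v f)) * D i - D i * vecMulVec (v f) (star (v f))))
    (hS'high : ∀ (i : Fin d) (f : ℝ), fL < |f| → |f| ≤ fH →
      S' i f = (2 * π * Complex.I * f * (SH * BH ^ 2)) •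
        (vecMulVec (v f) (star (v f)) * D i - D i * vecMulVec (v f) (star (v f)))) :
    ∀ i j : Fin d,
      (1 / 2 : ℂ) * ∫ f in (-fH)..fH,
          Matrix.trace ((S f)⁻¹ * S' i f * (S f)⁻¹ * S' j f)
        = (((4 * π ^ 2 / 3) * (fL ^ 3 * wL + (fH ^ 3 - fL ^ 3) * wH) * G i j : ℝ) : ℂ) :=
  two_band_whittle_FI_rate_highrate_general d M hM τ g P hP G hG v hv fL fH SL SH N0 lam hfL hfLH
    hSH hSLH hN0 hlam0 hlamH BL BH hBL hBH SwL SwH hSwL hSwH γL γH hγL hγH wL wH hwL hwH D hD S S'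
    hSlow hShigh hS'low hS'high
end

section
/- Fix 0 < f_L < f_H, S_L > S_H > 0, and N₀ > 0. Define the water-filling rate function R̂(λ) = f_L·max(0, log₂((S_L + N₀)/λ)) + (f_H − f_L)·max(0, log₂((S_H + N₀)/λ)) for λ > 0, and the critical rate R_crit = f_L·log₂((S_L + N₀)/(S_H + N₀)). If R > R_crit, then λ* = 2^{−R/f_H}·(S_L + N₀)^{f_L/f_H}·(S_H + N₀)^{(f_H − f_L)/f_H} satisfies 0 < λ* < S_H + N₀ and R̂(λ*) = R. -/
/-!
Everything is linear after taking `log₂`: with `a = S_L + N₀` and `b = S_H + N₀`,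
`f_H log₂ λ* = f_L log₂ a + (f_H − f_L) log₂ b − R`. Hence `λ* < b` is the inequality
`f_L (log₂ a − log₂ b) < R`, i.e. `R_crit < R`; then `λ* < b < a`, both bands are active, the
`max`es are their second arguments, and `R̂(λ*) = f_L log₂ a + (f_H − f_L) log₂ b − f_H log₂ λ* = R`.
-/

open Real

lemma mul_logb_rpow_mul_rpow_mul_rpow {B a b : ℝ} (hB : 0 < B) (hB1 : B ≠ 1)
    (ha : 0 < a) (hb : 0 < b) {fL fH R : ℝ} (hfH : fH ≠ 0) :
    fH * logb B (B ^ (-(R / fH)) * a ^ (fL / fH) * b ^ ((fH - fL) / fH))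
      = fL * logb B a + (fH - fL) * logb B b - R := by
  rw [logb_mul (by positivity) (by positivity), logb_mul (by positivity) (by positivity),
    logb_rpow hB hB1, logb_rpow_eq_mul_logb_of_pos ha, logb_rpow_eq_mul_logb_of_pos hb]
  field_simp
  ring

lemma max_zero_logb_div_of_le {B a x : ℝ} (hB : 1 < B) (hx : 0 < x) (hxa : x ≤ a) :
    max 0 (logb B (a / x)) = logb B a - logb B x := by
  rw [max_eq_right (logb_nonneg hB ((one_le_div hx).mpr hxa)),
    logb_div (hx.trans_le hxa).ne' hx.ne']

/-- **Closed-form water level, high-rate regime.** If `R > R_crit` then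
`λ* = 2^{−R/f_H}(S_L+N₀)^{f_L/f_H}(S_H+N₀)^{(f_H−f_L)/f_H}` satisfies
`0 < λ* < S_H + N₀` and solves the water-filling rate equation `R̂(λ*) = R`. -/
theorem waterfilling_level_high_rate
    (fL fH SL SH N0 : ℝ)
    (hfL : 0 < fL) (hfLH : fL < fH)
    (hSH : 0 < SH) (hSLH : SH < SL) (hN0 : 0 < N0)
    (Rhat : ℝ → ℝ)
    (hRhat : ∀ lam : ℝ, 0 < lam →
      Rhat lam = fL * max 0 (Real.logb 2 ((SL + N0) / lam))
        + (fH - fL) * max 0 (Real.logb 2 ((SH + N0) / lam)))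
    (Rcrit : ℝ) (hRcrit : Rcrit = fL * Real.logb 2 ((SL + N0) / (SH + N0)))
    (R : ℝ) (hR : Rcrit < R)
    (lamStar : ℝ)
    (hlamStar : lamStar = (2 : ℝ) ^ (-(R / fH)) * (SL + N0) ^ (fL / fH)
        * (SH + N0) ^ ((fH - fL) / fH)) :
    0 < lamStar ∧ lamStar < SH + N0 ∧ Rhat lamStar = R := by
  have hfH : 0 < fH := hfL.trans hfLH
  have hb : 0 < SH + N0 := by linarith
  have ha : 0 < SL + N0 := by linarith
  have hpos : 0 < lamStar := by rw [hlamStar]; positivity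
  have hlog : fH * logb 2 lamStar
      = fL * logb 2 (SL + N0) + (fH - fL) * logb 2 (SH + N0) - R := by
    rw [hlamStar]
    exact mul_logb_rpow_mul_rpow_mul_rpow two_pos (by norm_num) ha hb hfH.ne'
  rw [hRcrit, logb_div ha.ne' hb.ne'] at hR
  have hlt : lamStar < SH + N0 := by
    rw [← logb_lt_logb_iff one_lt_two hpos hb]
    exact lt_of_mul_lt_mul_left (by linarith) hfH.le
  refine ⟨hpos, hlt, ?_⟩
  rw [hRhat _ hpos, max_zero_logb_div_of_le one_lt_two hpos (by linarith),
    max_zero_logb_div_of_le one_lt_two hpos hlt.le]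
  linarith
end

section
/- Fix 0 < f_L < f_H, S_L > S_H > 0, and N₀ > 0. Define the water-filling rate function R̂(λ) = f_L·max(0, log₂((S_L + N₀)/λ)) + (f_H − f_L)·max(0, log₂((S_H + N₀)/λ)) for λ > 0, and the critical rate R_crit = f_L·log₂((S_L + N₀)/(S_H + N₀)). If 0 < R ≤ R_crit, then λ* = (S_L + N₀)·2^{−R/f_L} satisfies S_H + N₀ ≤ λ* < S_L + N₀, max(0, log₂((S_H + N₀)/λ*)) = 0, and R̂(λ*) = R. -/
open Real

/-! Below the critical rate the water level `λ* = (S_L + N₀) 2^{-R/f_L}` stays above the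
high-band level `S_H + N₀`, because `R / f_L ≤ log₂ ((S_L + N₀) / (S_H + N₀))`. The high band
therefore contributes nothing, and the low band contributes `f_L · log₂ (2^{R/f_L}) = R`. -/

namespace Real

variable {a b c t : ℝ}

lemma max_zero_logb_div_eq_zero_of_le (hb : 1 < b) (ha : 0 ≤ a) (hac : a ≤ c) :
    max 0 (logb b (a / c)) = 0 :=
  max_eq_left <| logb_nonpos hb (div_nonneg ha (ha.trans hac)) (div_le_one_of_le₀ hac (ha.trans hac))

lemma le_mul_rpow_neg_iff_le_logb (hb : 1 < b) (ha : 0 < a) (hc : 0 < c) :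
    c ≤ a * b ^ (-t) ↔ t ≤ logb b (a / c) := by
  have hbt : 0 < b ^ t := rpow_pos_of_pos (zero_lt_one.trans hb) t
  rw [le_logb_iff_rpow_le hb (div_pos ha hc), le_div_iff₀ hc, rpow_neg (zero_lt_one.trans hb).le,
    ← div_eq_mul_inv, le_div_iff₀ hbt, mul_comm]

lemma mul_rpow_neg_lt_self (hb : 1 < b) (ha : 0 < a) (ht : 0 < t) : a * b ^ (-t) < a :=
  mul_lt_of_lt_one_right ha (rpow_lt_one_of_one_lt_of_neg hb (neg_neg_of_pos ht))

lemma logb_div_mul_rpow_neg (hb : 0 < b) (hb1 : b ≠ 1) (ha : a ≠ 0) :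
    logb b (a / (a * b ^ (-t))) = t := by
  rw [rpow_neg hb.le, div_mul_eq_div_div, div_self ha, one_div, inv_inv, logb_rpow hb hb1]

end Real

theorem waterfilling_level_intermediate_rate_general
    (fL fH SL SH N0 : ℝ)
    (hfL : 0 < fL)
    (hSH : 0 < SH) (hSLH : SH < SL) (hN0 : 0 < N0)
    (Rhat : ℝ → ℝ)
    (hRhat : ∀ lam : ℝ, 0 < lam →
      Rhat lam = fL * max 0 (Real.logb 2 ((SL + N0) / lam))
        + (fH - fL) * max 0 (Real.logb 2 ((SH + N0) / lam)))
    (Rcrit : ℝ) (hRcrit : Rcrit = fL * Real.logb 2 ((SL + N0) / (SH + N0)))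
    (R : ℝ) (hR0 : 0 < R) (hR : R ≤ Rcrit)
    (lamStar : ℝ) (hlamStar : lamStar = (SL + N0) * (2 : ℝ) ^ (-(R / fL))) :
    SH + N0 ≤ lamStar ∧ lamStar < SL + N0 ∧
    max 0 (Real.logb 2 ((SH + N0) / lamStar)) = 0 ∧
    Rhat lamStar = R := by
  have hH : 0 < SH + N0 := by positivity
  have hL : 0 < SL + N0 := by linarith
  have hRfL : 0 < R / fL := div_pos hR0 hfL
  have hRfL_le : R / fL ≤ logb 2 ((SL + N0) / (SH + N0)) := by
    rw [div_le_iff₀' hfL, ← hRcrit]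
    exact hR
  have h_above : SH + N0 ≤ lamStar :=
    hlamStar ▸ (le_mul_rpow_neg_iff_le_logb one_lt_two hL hH).2 hRfL_le
  have h_high : max 0 (logb 2 ((SH + N0) / lamStar)) = 0 :=
    max_zero_logb_div_eq_zero_of_le one_lt_two hH.le h_above
  refine ⟨h_above, hlamStar ▸ mul_rpow_neg_lt_self one_lt_two hL hRfL, h_high, ?_⟩
  rw [hRhat _ (hH.trans_le h_above), h_high, hlamStar,
    logb_div_mul_rpow_neg two_pos (by norm_num) hL.ne', max_eq_right hRfL.le, mul_zero, add_zero,
    mul_div_cancel₀ _ hfL.ne']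

/-- **Closed-form water level, intermediate-rate regime.** If `0 < R ≤ R_crit` then
`λ* = (S_L + N₀) 2^{−R/f_L}` satisfies `S_H + N₀ ≤ λ* < S_L + N₀`, the high-band term
of the water-filling rate vanishes, and `R̂(λ*) = R`. -/
theorem waterfilling_level_intermediate_rate
    (fL fH SL SH N0 : ℝ)
    (hfL : 0 < fL) (hfLH : fL < fH)
    (hSH : 0 < SH) (hSLH : SH < SL) (hN0 : 0 < N0)
    (Rhat : ℝ → ℝ)
    (hRhat : ∀ lam : ℝ, 0 < lam →
      Rhat lam = fL * max 0 (Real.logb 2 ((SL + N0) / lam))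
        + (fH - fL) * max 0 (Real.logb 2 ((SH + N0) / lam)))
    (Rcrit : ℝ) (hRcrit : Rcrit = fL * Real.logb 2 ((SL + N0) / (SH + N0)))
    (R : ℝ) (hR0 : 0 < R) (hR : R ≤ Rcrit)
    (lamStar : ℝ) (hlamStar : lamStar = (SL + N0) * (2 : ℝ) ^ (-(R / fL))) :
    SH + N0 ≤ lamStar ∧ lamStar < SL + N0 ∧
    max 0 (Real.logb 2 ((SH + N0) / lamStar)) = 0 ∧
    Rhat lamStar = R :=
  waterfilling_level_intermediate_rate_general fL fH SL SH N0 hfL hSH hSLH hN0 Rhat hRhat Rcrit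
    hRcrit R hR0 hR lamStar hlamStar
end

section
/- Set M = 4, f_L = 5×10⁶, f_H = 2×10⁸, S_L = 100, S_H = 20, N₀ = 1, and R = 10⁷. Define the critical rate R_crit = f_L·log₂((S_L + N₀)/(S_H + N₀)). For the rate–distortion-optimal scheme define λ_RD = (S_L + N₀)·2^{−R/f_L}, B_L = 1 − 2^{−R/f_L}, S_{w,L} = B_L² N₀ + λ_RD B_L, γ_L = S_L B_L²/S_{w,L}, w_L = 2Mγ_L²/(1 + Mγ_L), and J_L = f_L³·w_L. For the band-selective scheme define λ_sel = (S_H + N₀)·2^{−R/(f_H − f_L)}, B_H = 1 − 2^{−R/(f_H − f_L)}, S_{w,H} = B_H² N₀ + λ_sel B_H, γ_H = S_H B_H²/S_{w,H}, w_H = 2Mγ_H²/(1 + Mγ_H), and J_H = (f_H³ − f_L³)·w_H. Then R < R_crit and J_L/J_H < 10^{−2}. -/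
open Real

/-- **Numerical mmWave/ISAC example.** With `M = 4`, `f_L = 5·10⁶`, `f_H = 2·10⁸`,
`S_L = 100`, `S_H = 20`, `N₀ = 1` and `R = 10⁷`, the rate is below the critical rate and
the ratio of the scalar Fisher-information terms of RD-optimal compression and of the
band-selective scheme satisfies `J_L / J_H < 10⁻²`. -/
theorem numerical_example_RD_suboptimal
    (M : ℕ) (hM : M = 4)
    (fL fH SL SH N0 R : ℝ)
    (hfL : fL = 5 * 10 ^ 6) (hfH : fH = 2 * 10 ^ 8)
    (hSL : SL = 100) (hSH : SH = 20) (hN0 : N0 = 1) (hR : R = 10 ^ 7)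
    (Rcrit : ℝ) (hRcrit : Rcrit = fL * Real.logb 2 ((SL + N0) / (SH + N0)))
    (lamRD : ℝ) (hlamRD : lamRD = (SL + N0) * (2 : ℝ) ^ (-(R / fL)))
    (BL : ℝ) (hBL : BL = 1 - (2 : ℝ) ^ (-(R / fL)))
    (SwL : ℝ) (hSwL : SwL = BL ^ 2 * N0 + lamRD * BL)
    (γL : ℝ) (hγL : γL = SL * BL ^ 2 / SwL)
    (wL : ℝ) (hwL : wL = 2 * M * γL ^ 2 / (1 + M * γL))
    (JL : ℝ) (hJL : JL = fL ^ 3 * wL)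
    (lamSel : ℝ) (hlamSel : lamSel = (SH + N0) * (2 : ℝ) ^ (-(R / (fH - fL))))
    (BH : ℝ) (hBH : BH = 1 - (2 : ℝ) ^ (-(R / (fH - fL))))
    (SwH : ℝ) (hSwH : SwH = BH ^ 2 * N0 + lamSel * BH)
    (γH : ℝ) (hγH : γH = SH * BH ^ 2 / SwH)
    (wH : ℝ) (hwH : wH = 2 * M * γH ^ 2 / (1 + M * γH))
    (JH : ℝ) (hJH : JH = (fH ^ 3 - fL ^ 3) * wH) :
    R < Rcrit ∧ JL / JH < 10 ^ (-2 : ℤ) := by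
  have hMR : (M : ℝ) = 4 := by rw [hM]; norm_num
  -- the low-band rpow is exactly 1/4
  have hexpL : (2 : ℝ) ^ (-(R / fL)) = 1 / 4 := by
    rw [hR, hfL, show -((10:ℝ) ^ 7 / (5 * 10 ^ 6)) = ((-2 : ℤ) : ℝ) by norm_num,
      Real.rpow_intCast]
    norm_num
  -- the high-band rpow: call it t, bound it
  set t : ℝ := (2 : ℝ) ^ (-(R / (fH - fL))) with ht
  have htpos : 0 < t := Real.rpow_pos_of_pos (by norm_num) _
  have ht39 : t ^ (39 : ℕ) = 1 / 4 := by
    rw [ht, ← Real.rpow_natCast ((2:ℝ) ^ (-(R / (fH - fL)))) 39,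
      ← Real.rpow_mul (by norm_num : (0:ℝ) ≤ 2), hR, hfH, hfL,
      show -((10:ℝ) ^ 7 / (2 * 10 ^ 8 - 5 * 10 ^ 6)) * (39:ℕ) = ((-2 : ℤ) : ℝ) by
        push_cast; norm_num,
      Real.rpow_intCast]
    norm_num
  have htu : t < 0.96509 := by
    by_contra h
    push_neg at h
    have h2 : (0.96509 : ℝ) ^ (39:ℕ) ≤ t ^ (39:ℕ) :=
      pow_le_pow_left₀ (by norm_num) h 39
    rw [ht39] at h2
    norm_num at h2
  have htl : 0.96507 < t := by
    by_contra h
    push_neg at h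
    have h2 : t ^ (39:ℕ) ≤ (0.96507 : ℝ) ^ (39:ℕ) :=
      pow_le_pow_left₀ htpos.le h 39
    rw [ht39] at h2
    norm_num at h2
  clear_value t
  clear ht ht39
  constructor
  · -- R < Rcrit
    rw [hRcrit, hfL, hSL, hSH, hN0, hR]
    have h4 : Real.logb 2 4 = 2 := by
      rw [show (4:ℝ) = 2 ^ ((2:ℕ):ℝ) by rw [Real.rpow_natCast]; norm_num,
        Real.logb_rpow (by norm_num)]
      all_goals norm_num
    have hlt : Real.logb 2 4 < Real.logb 2 ((100 + 1) / (20 + 1)) :=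
      Real.logb_lt_logb (by norm_num) (by norm_num) (by norm_num)
    rw [h4] at hlt
    nlinarith
  · -- values of the L-side quantities
    have hBL' : BL = 3 / 4 := by rw [hBL, hexpL]; norm_num
    have hlamRD' : lamRD = 101 / 4 := by rw [hlamRD, hexpL, hSL, hN0]; norm_num
    have hSwL' : SwL = 39 / 2 := by rw [hSwL, hBL', hlamRD', hN0]; norm_num
    have hγL' : γL = 75 / 26 := by rw [hγL, hSL, hBL', hSwL']; norm_num
    have hJL' : JL = 125 * 10 ^ 18 * (146250 / 27547) := by
      rw [hJL, hwL, hγL', hMR, hfL]; norm_num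
    -- H-side quantities in terms of t
    have hBH' : BH = 1 - t := hBH
    have hlamSel' : lamSel = 21 * t := by rw [hlamSel, hSH, hN0]; ring
    have hSwH' : SwH = (1 - t) ^ 2 + 21 * t * (1 - t) := by
      rw [hSwH, hBH', hlamSel', hN0]; ring
    have hγH' : γH = 20 * (1 - t) ^ 2 / SwH := by rw [hγH, hSH, hBH']
    have hwH' : wH = 8 * γH ^ 2 / (1 + 4 * γH) := by rw [hwH, hMR]; ring_nf
    have hJH' : JH = (7999875 * 10 ^ 18) * wH := by rw [hJH, hfH, hfL]; norm_num
    clear hRcrit hlamRD hBL hSwL hγL hwL hJL hexpL hBL' hlamRD' hSwL' hγL'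
      hlamSel hBH hSwH hlamSel' hBH' hM hfL hfH hSL hSH hN0 hR hMR hγH hwH hJH
    have hSwl : (0.70872 : ℝ) < SwH := by rw [hSwH']; nlinarith
    have hSwu : SwH < 0.70915 := by rw [hSwH']; nlinarith
    have hSwpos : 0 < SwH := by linarith
    have hγl : (0.034371 : ℝ) < γH := by
      rw [hγH', lt_div_iff₀ hSwpos]; nlinarith
    have hγu : γH < 0.034432 := by
      rw [hγH', div_lt_iff₀ hSwpos]; nlinarith
    have hdpos : (0 : ℝ) < 1 + 4 * γH := by nlinarith
    have hwl : (0.008307 : ℝ) < wH := by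
      rw [hwH', lt_div_iff₀ hdpos]; nlinarith
    have hJHl : (6.645 : ℝ) * 10 ^ 22 < JH := by
      rw [hJH']; nlinarith
    have hJHpos : 0 < JH := by nlinarith
    rw [div_lt_iff₀ hJHpos, hJL']
    have : ((10:ℝ) ^ (-2 : ℤ)) = 1 / 100 := by norm_num
    rw [this]
    nlinarith
end
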